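/- arXiv:2302.12641 — 7 statements merged into one kernel-verified Lean document; each statement's English description precedes it below -/
import Mathlib

section
/- Let (M, N, ∂) be a crossed module and K(M ⋊ N) its group algebra with σ(e_{m,n}) = e_n, τ(e_{m,n}) = e_{∂(m)n}. For v_{m,n} := e_{m,n} − e_{1,n} ∈ ker σ and w_{m',n'} := e_{m',n'} − e_{1,∂(m')n'} ∈ ker τ, the product v_{m,n} · w_{m',n'} equals e_{m·ⁿm', nn'} − e_{ⁿm', nn'} − e_{m, n∂(m')n'} + e_{1, n∂(m')n'}, and this product lies in the ideal J of K(M ⋊ N) generated by all cocycles e_{m'm,n} − e_{m,n} − e_{m',∂(m)n} + e_{1,∂(m)n}. -/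
/-- in K(M ⋊ N), the product of v_{m,n} = e_{m,n} - e_{1,n} ∈ ker σ and
w_{m',n'} = e_{m',n'} - e_{1,∂(m')n'} ∈ ker τ equals
e_{m·ⁿm', nn'} - e_{ⁿm', nn'} - e_{m, n∂(m')n'} + e_{1, n∂(m')n'}, and this
product lies in the cocycle ideal J. -/
theorem v_mul_w_eq_and_mem_cocycleIdeal
    {K M N : Type*} [Field K] [Group M] [Group N]
    (φ : N →* MulAut M) (d : M →* N)
    (h1 : ∀ (n : N) (m : M), d (φ n m) = n * d m * n⁻¹)
    (h2 : ∀ m m' : M, φ (d m) m' = m * m' * m⁻¹) :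
    ∀ (m m' : M) (n n' : N),
      let e : M ⋊[φ] N → MonoidAlgebra K (M ⋊[φ] N) :=
        fun g => MonoidAlgebra.of K (M ⋊[φ] N) g
      let J : TwoSidedIdeal (MonoidAlgebra K (M ⋊[φ] N)) :=
        TwoSidedIdeal.span {x | ∃ (a b : M) (c : N),
          x = e ⟨b * a, c⟩ - e ⟨a, c⟩ - e ⟨b, d a * c⟩ + e ⟨1, d a * c⟩}
      (e ⟨m, n⟩ - e ⟨1, n⟩) * (e ⟨m', n'⟩ - e ⟨1, d m' * n'⟩) =
          e ⟨m * φ n m', n * n'⟩ - e ⟨φ n m', n * n'⟩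
            - e ⟨m, n * (d m' * n')⟩ + e ⟨1, n * (d m' * n')⟩ ∧
      (e ⟨m, n⟩ - e ⟨1, n⟩) * (e ⟨m', n'⟩ - e ⟨1, d m' * n'⟩) ∈ J := by
  intro m m' n n' e J
  have hmul : ∀ g g' : M ⋊[φ] N, e g * e g' = e (g * g') := fun g g' =>
    (map_mul (MonoidAlgebra.of K (M ⋊[φ] N)) g g').symm
  have hprod : ∀ (a b : M) (c c' : N),
      (⟨a, c⟩ : M ⋊[φ] N) * ⟨b, c'⟩ = ⟨a * φ c b, c * c'⟩ := fun _ _ _ _ => rfl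
  have key : (e ⟨m, n⟩ - e ⟨1, n⟩) * (e ⟨m', n'⟩ - e ⟨1, d m' * n'⟩) =
      e ⟨m * φ n m', n * n'⟩ - e ⟨φ n m', n * n'⟩
        - e ⟨m, n * (d m' * n')⟩ + e ⟨1, n * (d m' * n')⟩ := by
    rw [sub_mul, mul_sub, mul_sub, hmul, hmul, hmul, hmul, hprod, hprod, hprod, hprod]
    simp only [map_one, mul_one, one_mul]
    abel
  refine ⟨key, ?_⟩
  rw [key]
  apply TwoSidedIdeal.subset_span
  refine ⟨φ n m', m, n * n', ?_⟩
  have hda : d (φ n m') * (n * n') = n * (d m' * n') := by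
    rw [h1]; group
  rw [hda]
end

section
/- Let (M, N, ∂) be a crossed module, K a field, K(M ⋊ N) its group algebra with σ(e_{m,n}) = e_n, τ(e_{m,n}) = e_{∂(m)n}, and J the cocycle ideal generated by e_{m'm,n} − e_{m,n} − e_{m',∂(m)n} + e_{1,∂(m)n}. Then σ(J) = 0 and τ(J) = 0, so σ and τ descend to well-defined algebra homomorphisms σ̄, τ̄: K(M ⋊ N)/J → K(N), and in the quotient the kernel condition ker σ̄ · ker τ̄ = 0 holds. -/
/-!
Let `ι : K[N] → K[M ⋊ N]` be induced by `n ↦ (1, n)`. If `σ u = 0` then `u = u - ι (σ u)`, and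
`u ↦ u - ι (σ u)` is linear, so `ker σ` lies in the span of the `v_g = e_g - e_{(1, g.right)}`;
likewise `ker τ` lies in the span of the `w_g = e_g - e_{(1, ∂(g.left) g.right)}`. The product
`v_{(m,n)} w_{(m',n')}` is the cocycle generator for `a = φ_n m'`, `b = m`, `c = n n'`, because
the equivariance `∂(φ_n m') = n ∂(m') n⁻¹` turns `n ∂(m') n'` into `∂(a) c`.
-/

open MonoidAlgebra
open scoped Pointwise

theorem MonoidAlgebra.mem_span_range_of_sub_of_eq_zero {R G H : Type*} [Ring R] [Monoid G]
    [Monoid H] (f : MonoidAlgebra R G →ₗ[R] MonoidAlgebra R H)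
    (ι : MonoidAlgebra R H →ₗ[R] MonoidAlgebra R G) {u : MonoidAlgebra R G} (hu : f u = 0) :
    u ∈ Submodule.span R (Set.range fun g => of R G g - ι (f (of R G g))) := by
  set L := LinearMap.id - ι ∘ₗ f
  have hL : ∀ x, L x ∈ Submodule.span R (Set.range fun g => of R G g - ι (f (of R G g))) := by
    intro x
    induction x using MonoidAlgebra.induction_on with
    | of g => exact Submodule.subset_span ⟨g, rfl⟩
    | add x y hx hy => rw [map_add]; exact add_mem hx hy
    | smul r x hx => rw [map_smul]; exact Submodule.smul_mem _ r hx
  simpa [L, hu] using hL u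

theorem TwoSidedIdeal.mul_mem_of_mem_span {R A : Type*} [CommSemiring R] [Ring A] [Algebra R A]
    (J : TwoSidedIdeal A) {s t : Set A} (hst : ∀ x ∈ s, ∀ y ∈ t, x * y ∈ J) {v w : A}
    (hv : v ∈ Submodule.span R s) (hw : w ∈ Submodule.span R t) : v * w ∈ J := by
  have hspan : ∀ z ∈ Submodule.span R (s * t), z ∈ J := fun z hz => by
    induction hz using Submodule.span_induction with
    | mem x hx =>
      obtain ⟨x, hx, y, hy, rfl⟩ := hx
      exact hst x hx y hy
    | zero => exact J.zero_mem
    | add x y _ _ hx hy => exact J.add_mem hx hy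
    | smul r x _ hx => rw [Algebra.smul_def]; exact J.mul_mem_left _ _ hx
  exact hspan _ (Submodule.span_mul_span R s t ▸ Submodule.mul_mem_mul hv hw)

section CrossedModule

variable (K : Type*) {M N : Type*} [CommRing K] [Group M] [Group N] (φ : N →* MulAut M)
  (d : M →* N)

theorem semidirectProduct_of_sub_of_one_mul_of_sub_of_one (m m' : M) (n n' k : N) :
    (of K (M ⋊[φ] N) ⟨m, n⟩ - of K _ ⟨1, n⟩) * (of K _ ⟨m', n'⟩ - of K _ ⟨1, k⟩) =
      of K _ ⟨m * φ n m', n * n'⟩ - of K _ ⟨φ n m', n * n'⟩ - of K _ ⟨m, n * k⟩ +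
        of K _ ⟨1, n * k⟩ := by
  simp only [sub_mul, mul_sub, ← map_mul, SemidirectProduct.mul_def, map_one, one_mul, mul_one]
  abel

noncomputable def cocycleIdeal : TwoSidedIdeal (MonoidAlgebra K (M ⋊[φ] N)) :=
  TwoSidedIdeal.span {x | ∃ (a b : M) (c : N), x = of K _ ⟨b * a, c⟩ - of K _ ⟨a, c⟩ -
    of K _ ⟨b, d a * c⟩ + of K _ ⟨1, d a * c⟩}

variable {K φ d}

theorem cocycleIdeal_le_ker_of_map_of_eq_right
    (σ : MonoidAlgebra K (M ⋊[φ] N) →+* MonoidAlgebra K N)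
    (hσ : ∀ g : M ⋊[φ] N, σ (of K _ g) = of K N g.right) :
    cocycleIdeal K φ d ≤ TwoSidedIdeal.ker σ := TwoSidedIdeal.span_le.2 <| by
  rintro _ ⟨a, b, c, rfl⟩
  simp only [SetLike.mem_coe, TwoSidedIdeal.mem_ker, map_add, map_sub, hσ]
  abel

theorem cocycleIdeal_le_ker_of_map_of_eq_boundary_mul_right
    (τ : MonoidAlgebra K (M ⋊[φ] N) →+* MonoidAlgebra K N)
    (hτ : ∀ g : M ⋊[φ] N, τ (of K _ g) = of K N (d g.left * g.right)) :
    cocycleIdeal K φ d ≤ TwoSidedIdeal.ker τ := TwoSidedIdeal.span_le.2 <| by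
  rintro _ ⟨a, b, c, rfl⟩
  simp only [SetLike.mem_coe, TwoSidedIdeal.mem_ker, map_add, map_sub, hτ, map_mul, map_one,
    one_mul, mul_assoc]
  abel

theorem mul_mem_cocycleIdeal (hd : ∀ (n : N) (m : M), d (φ n m) = n * d m * n⁻¹)
    {σ τ : MonoidAlgebra K (M ⋊[φ] N) →ₗ[K] MonoidAlgebra K N}
    (hσ : ∀ g : M ⋊[φ] N, σ (of K _ g) = of K N g.right)
    (hτ : ∀ g : M ⋊[φ] N, τ (of K _ g) = of K N (d g.left * g.right))
    {a b : MonoidAlgebra K (M ⋊[φ] N)} (ha : σ a = 0) (hb : τ b = 0) :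
    a * b ∈ cocycleIdeal K φ d := by
  let ι := mapDomainLinearMap K K (SemidirectProduct.inr (φ := φ))
  have hι : ∀ n, ι (of K N n) = of K (M ⋊[φ] N) ⟨1, n⟩ := fun n => by
    simp only [ι, of_apply, mapDomainLinearMap_single]; rfl
  refine (cocycleIdeal K φ d).mul_mem_of_mem_span (R := K) ?_
    (mem_span_range_of_sub_of_eq_zero σ ι ha) (mem_span_range_of_sub_of_eq_zero τ ι hb)
  rintro _ ⟨⟨m, n⟩, rfl⟩ _ ⟨⟨m', n'⟩, rfl⟩
  have hc : n * (d m' * n') = d (φ n m') * (n * n') := by rw [hd]; group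
  simp only [hσ, hτ, hι]
  rw [semidirectProduct_of_sub_of_one_mul_of_sub_of_one, hc]
  exact TwoSidedIdeal.subset_span ⟨φ n m', m, n * n', rfl⟩

end CrossedModule

theorem cocycleQuotient_cat1Algebra_general
    {K M N : Type*} [Field K] [Group M] [Group N]
    (φ : N →* MulAut M) (d : M →* N)
    (h1 : ∀ (n : N) (m : M), d (φ n m) = n * d m * n⁻¹)
    (σ τ : MonoidAlgebra K (M ⋊[φ] N) →ₐ[K] MonoidAlgebra K N)
    (hσ : ∀ g : M ⋊[φ] N, σ (MonoidAlgebra.of K (M ⋊[φ] N) g) =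
        MonoidAlgebra.of K N g.right)
    (hτ : ∀ g : M ⋊[φ] N, τ (MonoidAlgebra.of K (M ⋊[φ] N) g) =
        MonoidAlgebra.of K N (d g.left * g.right)) :
    let e : M ⋊[φ] N → MonoidAlgebra K (M ⋊[φ] N) :=
      fun g => MonoidAlgebra.of K (M ⋊[φ] N) g
    let J : TwoSidedIdeal (MonoidAlgebra K (M ⋊[φ] N)) :=
      TwoSidedIdeal.span {x | ∃ (a b : M) (c : N),
        x = e ⟨b * a, c⟩ - e ⟨a, c⟩ - e ⟨b, d a * c⟩ + e ⟨1, d a * c⟩}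
    (∀ x ∈ J, σ x = 0) ∧ (∀ x ∈ J, τ x = 0) ∧
    ∃ σb τb : J.ringCon.Quotient →+* MonoidAlgebra K N,
      (∀ x : MonoidAlgebra K (M ⋊[φ] N), σb x = σ x) ∧
      (∀ x : MonoidAlgebra K (M ⋊[φ] N), τb x = τ x) ∧
      (∀ x y : J.ringCon.Quotient, σb x = 0 → τb y = 0 → x * y = 0) := by
  intro e J
  have hσJ : J ≤ TwoSidedIdeal.ker σ :=
    cocycleIdeal_le_ker_of_map_of_eq_right σ.toRingHom hσ
  have hτJ : J ≤ TwoSidedIdeal.ker τ :=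
    cocycleIdeal_le_ker_of_map_of_eq_boundary_mul_right τ.toRingHom hτ
  refine ⟨fun x hx => (TwoSidedIdeal.mem_ker σ).1 (hσJ hx),
    fun x hx => (TwoSidedIdeal.mem_ker τ).1 (hτJ hx),
    J.ringCon.lift σ.toRingHom (TwoSidedIdeal.ringCon_le_iff.1 hσJ),
    J.ringCon.lift τ.toRingHom (TwoSidedIdeal.ringCon_le_iff.1 hτJ),
    fun _ => rfl, fun _ => rfl, ?_⟩
  intro x y hx hy
  obtain ⟨a, rfl⟩ := J.ringCon.mk'_surjective x
  obtain ⟨b, rfl⟩ := J.ringCon.mk'_surjective y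
  rw [← map_mul, ← TwoSidedIdeal.mem_ker, TwoSidedIdeal.ker_ringCon_mk']
  exact mul_mem_cocycleIdeal h1 (σ := σ.toLinearMap) (τ := τ.toLinearMap) hσ hτ hx hy

/-- σ and τ vanish on the cocycle ideal J, hence descend to
well-defined homomorphisms σ̄, τ̄ on the quotient K(M ⋊ N)/J, and in the
quotient the kernel condition ker σ̄ · ker τ̄ = 0 holds. -/
theorem cocycleQuotient_cat1Algebra
    {K M N : Type*} [Field K] [Group M] [Group N]
    (φ : N →* MulAut M) (d : M →* N)
    (h1 : ∀ (n : N) (m : M), d (φ n m) = n * d m * n⁻¹)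
    (h2 : ∀ m m' : M, φ (d m) m' = m * m' * m⁻¹)
    (σ τ : MonoidAlgebra K (M ⋊[φ] N) →ₐ[K] MonoidAlgebra K N)
    (hσ : ∀ g : M ⋊[φ] N, σ (MonoidAlgebra.of K (M ⋊[φ] N) g) =
        MonoidAlgebra.of K N g.right)
    (hτ : ∀ g : M ⋊[φ] N, τ (MonoidAlgebra.of K (M ⋊[φ] N) g) =
        MonoidAlgebra.of K N (d g.left * g.right)) :
    let e : M ⋊[φ] N → MonoidAlgebra K (M ⋊[φ] N) :=
      fun g => MonoidAlgebra.of K (M ⋊[φ] N) g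
    let J : TwoSidedIdeal (MonoidAlgebra K (M ⋊[φ] N)) :=
      TwoSidedIdeal.span {x | ∃ (a b : M) (c : N),
        x = e ⟨b * a, c⟩ - e ⟨a, c⟩ - e ⟨b, d a * c⟩ + e ⟨1, d a * c⟩}
    (∀ x ∈ J, σ x = 0) ∧ (∀ x ∈ J, τ x = 0) ∧
    ∃ σb τb : J.ringCon.Quotient →+* MonoidAlgebra K N,
      (∀ x : MonoidAlgebra K (M ⋊[φ] N), σb x = σ x) ∧
      (∀ x : MonoidAlgebra K (M ⋊[φ] N), τb x = τ x) ∧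
      (∀ x y : J.ringCon.Quotient, σb x = 0 → τb y = 0 → x * y = 0) :=
  cocycleQuotient_cat1Algebra_general φ d h1 σ τ hσ hτ
end

section
/- Let (L, M, N, ∂₂, ∂₁, {−,−}) be a 2-crossed module of groups. The operation (l,m,n)(l',m',n') = (l · ^m(ⁿl'), m · ⁿm', nn') makes L ⋊ M ⋊ N a group, where ^m l = {∂₂ l, m}·l denotes the induced action of M on L via the Peiffer lifting. -/
/-!
By 2CM1–2CM4 the Peiffer lifting makes `^m l = {∂₂l, m}·l` an action of `M` on `L` by
automorphisms, and by 2CM5 this action intertwines the `N`-actions, so `(m, n) ↦ ^m(ⁿ-)` is an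
action of `M ⋊ N` on `L`. The given multiplication on `L × M × N` is then that of the iterated
semidirect product `L ⋊ (M ⋊ N)`.
-/

theorem groupLaws_of_equiv {α G : Type*} [Group G] (e : α ≃ G) (mul : α → α → α) (one : α)
    (he_mul : ∀ a b, e (mul a b) = e a * e b) (he_one : e one = 1) :
    (∀ a b c, mul (mul a b) c = mul a (mul b c)) ∧
    (∀ a, mul one a = a ∧ mul a one = a) ∧
    (∀ a, ∃ b, mul a b = one ∧ mul b a = one) := by
  refine ⟨fun a b c => e.injective ?_, fun a => ⟨e.injective ?_, e.injective ?_⟩,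
    fun a => ⟨e.symm (e a)⁻¹, e.injective ?_, e.injective ?_⟩⟩ <;>
    simp [he_mul, he_one, mul_assoc]

section PeifferAction

variable {L M N : Type*} [Group L] [Group M] [Group N]
  (d2 : L →* M) (d1 : M →* N) (pl : M → M → L) (phiM : N →* MulAut M) (phiL : N →* MulAut L)

def peifferAct (m : M) (l : L) : L := pl (d2 l) m * l

variable {d2 d1 pl phiM phiL}

theorem peifferAct_eq_inv_mul
    (h2cm4 : ∀ (m : M) (l : L), pl m (d2 l) * pl (d2 l) m = phiL (d1 m) l * l⁻¹)
    (m : M) (l : L) : peifferAct d2 pl m l = (pl m (d2 l))⁻¹ * phiL (d1 m) l := by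
  rw [peifferAct, mul_inv_eq_iff_eq_mul.mp (h2cm4 m l).symm]
  group

theorem d2_peifferAct (hcomplex : ∀ l : L, d1 (d2 l) = 1)
    (h2cm1 : ∀ m m' : M, d2 (pl m m') = phiM (d1 m) m' * m * m'⁻¹ * m⁻¹)
    (m : M) (l : L) : d2 (peifferAct d2 pl m l) = m * d2 l * m⁻¹ := by
  simp only [peifferAct, map_mul, h2cm1, hcomplex, map_one, MulAut.one_apply]
  group

theorem peifferAct_one_left (h2cm2 : ∀ l l' : L, pl (d2 l) (d2 l') = l' * l * l'⁻¹ * l⁻¹)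
    (l : L) : peifferAct d2 pl 1 l = l := by
  simpa [peifferAct] using h2cm2 l 1

theorem peifferAct_mul_left (hcomplex : ∀ l : L, d1 (d2 l) = 1)
    (h2cm1 : ∀ m m' : M, d2 (pl m m') = phiM (d1 m) m' * m * m'⁻¹ * m⁻¹)
    (h2cm3i : ∀ m m' m'' : M,
      pl (m * m') m'' = phiL (d1 m) (pl m' m'') * pl m (m' * m'' * m'⁻¹))
    (h2cm4 : ∀ (m : M) (l : L), pl m (d2 l) * pl (d2 l) m = phiL (d1 m) l * l⁻¹)
    (m m' : M) (l : L) :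
    peifferAct d2 pl (m * m') l = peifferAct d2 pl m (peifferAct d2 pl m' l) := by
  have h3 := h2cm3i m m' (d2 l)
  rw [← d2_peifferAct hcomplex h2cm1] at h3
  rw [peifferAct_eq_inv_mul h2cm4, peifferAct_eq_inv_mul h2cm4 m, h3,
    peifferAct_eq_inv_mul h2cm4 m', map_mul d1, map_mul phiL, MulAut.mul_apply,
    map_mul (phiL (d1 m)), map_inv (phiL (d1 m))]
  group

theorem peifferAct_mul_right (hcomplex : ∀ l : L, d1 (d2 l) = 1)
    (h2cm1 : ∀ m m' : M, d2 (pl m m') = phiM (d1 m) m' * m * m'⁻¹ * m⁻¹)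
    (h2cm2 : ∀ l l' : L, pl (d2 l) (d2 l') = l' * l * l'⁻¹ * l⁻¹)
    (h2cm3ii : ∀ m m' m'' : M,
      pl m (m' * m'') = pl m m' * (pl (d2 (pl m m'')) (m * m' * m⁻¹) * pl m m''))
    (h2cm4 : ∀ (m : M) (l : L), pl m (d2 l) * pl (d2 l) m = phiL (d1 m) l * l⁻¹)
    (m : M) (l l' : L) :
    peifferAct d2 pl m (l * l') = peifferAct d2 pl m l * peifferAct d2 pl m l' := by
  have h3 := h2cm3ii m (d2 l) (d2 l')
  rw [← d2_peifferAct hcomplex h2cm1, h2cm2] at h3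
  rw [peifferAct_eq_inv_mul h2cm4, peifferAct_eq_inv_mul h2cm4 m l,
    peifferAct_eq_inv_mul h2cm4 m l', map_mul d2, h3, map_mul (phiL (d1 m)),
    peifferAct_eq_inv_mul h2cm4 m l]
  group

theorem map_peifferAct (heqv2 : ∀ (n : N) (l : L), d2 (phiL n l) = phiM n (d2 l))
    (h2cm5 : ∀ (n : N) (m m' : M), phiL n (pl m m') = pl (phiM n m) (phiM n m'))
    (n : N) (m : M) (l : L) :
    phiL n (peifferAct d2 pl m l) = peifferAct d2 pl (phiM n m) (phiL n l) := by
  simp only [peifferAct, map_mul, h2cm5, heqv2]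

variable (d2 d1 pl phiM phiL)

abbrev peifferMulDistribMulAction (hcomplex : ∀ l : L, d1 (d2 l) = 1)
    (h2cm1 : ∀ m m' : M, d2 (pl m m') = phiM (d1 m) m' * m * m'⁻¹ * m⁻¹)
    (h2cm2 : ∀ l l' : L, pl (d2 l) (d2 l') = l' * l * l'⁻¹ * l⁻¹)
    (h2cm3i : ∀ m m' m'' : M,
      pl (m * m') m'' = phiL (d1 m) (pl m' m'') * pl m (m' * m'' * m'⁻¹))
    (h2cm3ii : ∀ m m' m'' : M,
      pl m (m' * m'') = pl m m' * (pl (d2 (pl m m'')) (m * m' * m⁻¹) * pl m m''))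
    (h2cm4 : ∀ (m : M) (l : L), pl m (d2 l) * pl (d2 l) m = phiL (d1 m) l * l⁻¹) :
    MulDistribMulAction M L where
  smul := peifferAct d2 pl
  one_smul := peifferAct_one_left h2cm2
  mul_smul := peifferAct_mul_left hcomplex h2cm1 h2cm3i h2cm4
  smul_mul := peifferAct_mul_right hcomplex h2cm1 h2cm2 h2cm3ii h2cm4
  smul_one m := by
    show peifferAct d2 pl m 1 = 1
    simpa using peifferAct_mul_right hcomplex h2cm1 h2cm2 h2cm3ii h2cm4 m 1 1

end PeifferAction

theorem MulDistribMulAction.toMulAut_comp_eq_conj_comp {L M N : Type*} [Group L] [Group M]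
    [Group N] [MulDistribMulAction M L] (phiM : N →* MulAut M) (phiL : N →* MulAut L)
    (h : ∀ (n : N) (m : M) (l : L), phiL n (m • l) = phiM n m • phiL n l) (n : N) :
    (toMulAut M L).comp (phiM n).toMonoidHom =
      (MulAut.conj (phiL n)).toMonoidHom.comp (toMulAut M L) := by
  ext m l
  simp [h]

theorem twoCrossedModule_semidirect_group_general
    {L M N : Type*} [Group L] [Group M] [Group N]
    (phiM : N →* MulAut M) (phiL : N →* MulAut L)
    (d2 : L →* M) (d1 : M →* N) (pl : M → M → L)
    (hcomplex : ∀ l : L, d1 (d2 l) = 1)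
    (heqv2 : ∀ (n : N) (l : L), d2 (phiL n l) = phiM n (d2 l))
    (h2cm1 : ∀ m m' : M, d2 (pl m m') = phiM (d1 m) m' * m * m'⁻¹ * m⁻¹)
    (h2cm2 : ∀ l l' : L, pl (d2 l) (d2 l') = l' * l * l'⁻¹ * l⁻¹)
    (h2cm3i : ∀ m m' m'' : M,
      pl (m * m') m'' = phiL (d1 m) (pl m' m'') * pl m (m' * m'' * m'⁻¹))
    (h2cm3ii : ∀ m m' m'' : M,
      pl m (m' * m'') = pl m m' * (pl (d2 (pl m m'')) (m * m' * m⁻¹) * pl m m''))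
    (h2cm4 : ∀ (m : M) (l : L), pl m (d2 l) * pl (d2 l) m = phiL (d1 m) l * l⁻¹)
    (h2cm5 : ∀ (n : N) (m m' : M), phiL n (pl m m') = pl (phiM n m) (phiM n m')) :
    let aL : M → L → L := fun m l => pl (d2 l) m * l
    let mul3 : L × M × N → L × M × N → L × M × N := fun a b =>
      (a.1 * aL a.2.1 (phiL a.2.2 b.1), a.2.1 * phiM a.2.2 b.2.1, a.2.2 * b.2.2)
    (∀ a b c : L × M × N, mul3 (mul3 a b) c = mul3 a (mul3 b c)) ∧
    (∀ a : L × M × N, mul3 (1, 1, 1) a = a ∧ mul3 a (1, 1, 1) = a) ∧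
    (∀ a : L × M × N, ∃ b : L × M × N,
      mul3 a b = (1, 1, 1) ∧ mul3 b a = (1, 1, 1)) := by
  intro aL mul3
  let := peifferMulDistribMulAction d2 d1 pl phiM phiL hcomplex h2cm1 h2cm2 h2cm3i h2cm3ii h2cm4
  let ψ : M ⋊[phiM] N →* MulAut L := SemidirectProduct.lift (MulDistribMulAction.toMulAut M L)
    phiL (MulDistribMulAction.toMulAut_comp_eq_conj_comp phiM phiL (map_peifferAct heqv2 h2cm5))
  let e : L × M × N ≃ L ⋊[ψ] (M ⋊[phiM] N) :=
    (Equiv.prodCongr (Equiv.refl L) SemidirectProduct.equivProd.symm).trans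
      SemidirectProduct.equivProd.symm
  exact groupLaws_of_equiv e mul3 (1, 1, 1) (fun _ _ => rfl) rfl

/-- for a 2-crossed module (L, M, N, ∂₂, ∂₁, {-,-}), the operation
(l,m,n)(l',m',n') = (l · ^m(ⁿl'), m · ⁿm', nn') makes L ⋊ M ⋊ N a group, where
^m l = {∂₂l, m}·l is the action of M on L induced by the Peiffer lifting. -/
theorem twoCrossedModule_semidirect_group
    {L M N : Type*} [Group L] [Group M] [Group N]
    (phiM : N →* MulAut M) (phiL : N →* MulAut L)
    (d2 : L →* M) (d1 : M →* N) (pl : M → M → L)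
    (hcomplex : ∀ l : L, d1 (d2 l) = 1)
    (heqv2 : ∀ (n : N) (l : L), d2 (phiL n l) = phiM n (d2 l))
    (heqv1 : ∀ (n : N) (m : M), d1 (phiM n m) = n * d1 m * n⁻¹)
    (h2cm1 : ∀ m m' : M, d2 (pl m m') = phiM (d1 m) m' * m * m'⁻¹ * m⁻¹)
    (h2cm2 : ∀ l l' : L, pl (d2 l) (d2 l') = l' * l * l'⁻¹ * l⁻¹)
    (h2cm3i : ∀ m m' m'' : M,
      pl (m * m') m'' = phiL (d1 m) (pl m' m'') * pl m (m' * m'' * m'⁻¹))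
    (h2cm3ii : ∀ m m' m'' : M,
      pl m (m' * m'') = pl m m' * (pl (d2 (pl m m'')) (m * m' * m⁻¹) * pl m m''))
    (h2cm4 : ∀ (m : M) (l : L), pl m (d2 l) * pl (d2 l) m = phiL (d1 m) l * l⁻¹)
    (h2cm5 : ∀ (n : N) (m m' : M), phiL n (pl m m') = pl (phiM n m) (phiM n m')) :
    let aL : M → L → L := fun m l => pl (d2 l) m * l
    let mul3 : L × M × N → L × M × N → L × M × N := fun a b =>
      (a.1 * aL a.2.1 (phiL a.2.2 b.1), a.2.1 * phiM a.2.2 b.2.1, a.2.2 * b.2.2)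
    (∀ a b c : L × M × N, mul3 (mul3 a b) c = mul3 a (mul3 b c)) ∧
    (∀ a : L × M × N, mul3 (1, 1, 1) a = a ∧ mul3 a (1, 1, 1) = a) ∧
    (∀ a : L × M × N, ∃ b : L × M × N,
      mul3 a b = (1, 1, 1) ∧ mul3 b a = (1, 1, 1)) :=
  twoCrossedModule_semidirect_group_general phiM phiL d2 d1 pl hcomplex heqv2 h2cm1 h2cm2 h2cm3i
    h2cm3ii h2cm4 h2cm5
end

section
/- Let (L, M, N, ∂₂, ∂₁, {−,−}) be a 2-crossed module with C₃ = L ⋊ M ⋊ N (multiplication (l,m,n)(l',m',n') = (l·^m(ⁿl'), m·ⁿm', nn')) and C₂ = M ⋊ N. The maps s₃(l,m,n) = (m,n) and t₃(l,m,n) = (∂₂(l)·m, n) are group homomorphisms C₃ → C₂. -/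
/-- the maps s₃(l,m,n) = (m,n) and t₃(l,m,n) = (∂₂(l)m, n) are
group homomorphisms from C₃ = L ⋊ M ⋊ N to C₂ = M ⋊ N. -/
theorem s3_t3_homomorphisms
    {L M N : Type*} [Group L] [Group M] [Group N]
    (phiM : N →* MulAut M) (phiL : N →* MulAut L)
    (d2 : L →* M) (d1 : M →* N) (pl : M → M → L)
    (hcomplex : ∀ l : L, d1 (d2 l) = 1)
    (heqv2 : ∀ (n : N) (l : L), d2 (phiL n l) = phiM n (d2 l))
    (heqv1 : ∀ (n : N) (m : M), d1 (phiM n m) = n * d1 m * n⁻¹)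
    (h2cm1 : ∀ m m' : M, d2 (pl m m') = phiM (d1 m) m' * m * m'⁻¹ * m⁻¹)
    (h2cm2 : ∀ l l' : L, pl (d2 l) (d2 l') = l' * l * l'⁻¹ * l⁻¹)
    (h2cm3i : ∀ m m' m'' : M,
      pl (m * m') m'' = phiL (d1 m) (pl m' m'') * pl m (m' * m'' * m'⁻¹))
    (h2cm3ii : ∀ m m' m'' : M,
      pl m (m' * m'') = pl m m' * (pl (d2 (pl m m'')) (m * m' * m⁻¹) * pl m m''))
    (h2cm4 : ∀ (m : M) (l : L), pl m (d2 l) * pl (d2 l) m = phiL (d1 m) l * l⁻¹)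
    (h2cm5 : ∀ (n : N) (m m' : M), phiL n (pl m m') = pl (phiM n m) (phiM n m')) :
    let aL : M → L → L := fun m l => pl (d2 l) m * l
    let mul3 : L × M × N → L × M × N → L × M × N := fun a b =>
      (a.1 * aL a.2.1 (phiL a.2.2 b.1), a.2.1 * phiM a.2.2 b.2.1, a.2.2 * b.2.2)
    let mul2 : M × N → M × N → M × N := fun p q =>
      (p.1 * phiM p.2 q.1, p.2 * q.2)
    let s3 : L × M × N → M × N := fun a => (a.2.1, a.2.2)
    let t3 : L × M × N → M × N := fun a => (d2 a.1 * a.2.1, a.2.2)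
    (∀ a b : L × M × N, s3 (mul3 a b) = mul2 (s3 a) (s3 b)) ∧
    (∀ a b : L × M × N, t3 (mul3 a b) = mul2 (t3 a) (t3 b)) ∧
    s3 (1, 1, 1) = (1, 1) ∧ t3 (1, 1, 1) = (1, 1) := by
  intro aL mul3 mul2 s3 t3
  refine ⟨fun a b => rfl, fun a b => ?_, rfl, ?_⟩
  · simp only [t3, mul3, mul2, aL, map_mul, h2cm1, hcomplex, map_one, MulAut.one_apply,
      heqv2, Prod.mk.injEq]
    simp [heqv1, hcomplex]
    group
  · simp [t3]
end

section
/- Let (L, M, N, ∂₂, ∂₁, {−,−}) be a 2-crossed module. In the group C₃ = L ⋊ M ⋊ N with multiplication (l,m,n)(l',m',n') = (l·^m(ⁿl'), m·ⁿm', nn'), the 2-vertical composition (l',∂₂(l)m,n) #₃ (l,m,n) := (l'l, m, n) and the group multiplication satisfy the interchange law: (α #₃ β)·(γ #₃ δ) = (α·γ) #₃ (β·δ) whenever both sides are defined, i.e., for α = (l₁,m₁,n₁), β = (l'₁,∂₂(l₁)m₁,n₁), γ = (l₂,m₂,n₂), δ = (l'₂,∂₂(l₂)m₂,n₂). -/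
/-- interchange law between the 2-vertical composition
(l',∂₂(l)m,n) #₃ (l,m,n) = (l'l,m,n) and the group multiplication of
C₃ = L ⋊ M ⋊ N: (α #₃ β)·(γ #₃ δ) = (α·γ) #₃ (β·δ) for
α = (l₁,m₁,n₁), β = (l₁',∂₂(l₁)m₁,n₁), γ = (l₂,m₂,n₂), δ = (l₂',∂₂(l₂)m₂,n₂). -/
theorem interchange_law_vcomp_mul
    {L M N : Type*} [Group L] [Group M] [Group N]
    (phiM : N →* MulAut M) (phiL : N →* MulAut L)
    (d2 : L →* M) (d1 : M →* N) (pl : M → M → L)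
    (hcomplex : ∀ l : L, d1 (d2 l) = 1)
    (heqv2 : ∀ (n : N) (l : L), d2 (phiL n l) = phiM n (d2 l))
    (heqv1 : ∀ (n : N) (m : M), d1 (phiM n m) = n * d1 m * n⁻¹)
    (h2cm1 : ∀ m m' : M, d2 (pl m m') = phiM (d1 m) m' * m * m'⁻¹ * m⁻¹)
    (h2cm2 : ∀ l l' : L, pl (d2 l) (d2 l') = l' * l * l'⁻¹ * l⁻¹)
    (h2cm3i : ∀ m m' m'' : M,
      pl (m * m') m'' = phiL (d1 m) (pl m' m'') * pl m (m' * m'' * m'⁻¹))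
    (h2cm3ii : ∀ m m' m'' : M,
      pl m (m' * m'') = pl m m' * (pl (d2 (pl m m'')) (m * m' * m⁻¹) * pl m m''))
    (h2cm4 : ∀ (m : M) (l : L), pl m (d2 l) * pl (d2 l) m = phiL (d1 m) l * l⁻¹)
    (h2cm5 : ∀ (n : N) (m m' : M), phiL n (pl m m') = pl (phiM n m) (phiM n m')) :
    let aL : M → L → L := fun m l => pl (d2 l) m * l
    let mul3 : L × M × N → L × M × N → L × M × N := fun a b =>
      (a.1 * aL a.2.1 (phiL a.2.2 b.1), a.2.1 * phiM a.2.2 b.2.1, a.2.2 * b.2.2)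
    ∀ (l₁ l₁' l₂ l₂' : L) (m₁ m₂ : M) (n₁ n₂ : N),
      mul3 (l₁' * l₁, m₁, n₁) (l₂' * l₂, m₂, n₂) =
        ((mul3 (l₁', d2 l₁ * m₁, n₁) (l₂', d2 l₂ * m₂, n₂)).1 *
            (mul3 (l₁, m₁, n₁) (l₂, m₂, n₂)).1,
          (mul3 (l₁, m₁, n₁) (l₂, m₂, n₂)).2) := by
  intro aL mul3 l₁ l₁' l₂ l₂' m₁ m₂ n₁ n₂
  simp only [mul3, aL, map_mul, Prod.mk.injEq]
  refine ⟨?_, trivial⟩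
  set a := phiL n₁ l₂' with ha
  set b := phiL n₁ l₂ with hb
  -- reduce to the core identity
  have core : l₁ * (pl (d2 a * d2 b) m₁) * a =
      pl (d2 a) (d2 l₁ * m₁) * a * l₁ * pl (d2 b) m₁ := by
    set P := pl (d2 b) m₁ with hPdef
    set Q := pl (d2 a) m₁ with hQdef
    have hP : d2 P = m₁ * d2 b * m₁⁻¹ * (d2 b)⁻¹ := by
      rw [hPdef, h2cm1, hcomplex, map_one, MulAut.one_apply]
    have f1 : pl (d2 a * d2 b) m₁ = P * pl (d2 a) (d2 b * m₁ * (d2 b)⁻¹) := by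
      rw [h2cm3i, hcomplex, map_one, MulAut.one_apply]
    have f2 : d2 b * m₁ * (d2 b)⁻¹ = d2 P⁻¹ * m₁ := by
      rw [map_inv, hP]; group
    have f3 : pl (d2 a) (d2 P⁻¹ * m₁) =
        (P⁻¹ * a * P⁻¹⁻¹ * a⁻¹) *
          (((a * P⁻¹ * a⁻¹) * Q * (a * P⁻¹ * a⁻¹)⁻¹ * Q⁻¹) * Q) := by
      rw [h2cm3ii, ← hQdef, ← h2cm2 a P⁻¹]
      have : d2 a * d2 P⁻¹ * (d2 a)⁻¹ = d2 (a * P⁻¹ * a⁻¹) := by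
        simp [map_mul, map_inv]
      rw [this, h2cm2 Q (a * P⁻¹ * a⁻¹)]
    have f4 : pl (d2 a) (d2 l₁ * m₁) =
        (l₁ * a * l₁⁻¹ * a⁻¹) *
          (((a * l₁ * a⁻¹) * Q * (a * l₁ * a⁻¹)⁻¹ * Q⁻¹) * Q) := by
      rw [h2cm3ii, ← hQdef, ← h2cm2 a l₁]
      have : d2 a * d2 l₁ * (d2 a)⁻¹ = d2 (a * l₁ * a⁻¹) := by
        simp [map_mul, map_inv]
      rw [this, h2cm2 Q (a * l₁ * a⁻¹)]
    rw [f1, f2, f3, f4]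
    group
  calc l₁' * l₁ * (pl (d2 a * d2 b) m₁ * (a * b))
      = l₁' * (l₁ * pl (d2 a * d2 b) m₁ * a) * b := by
        group
    _ = l₁' * (pl (d2 a) (d2 l₁ * m₁) * a * l₁ * pl (d2 b) m₁) * b := by rw [core]
    _ = l₁' * (pl (d2 a) (d2 l₁ * m₁) * a) * (l₁ * (pl (d2 b) m₁ * b)) := by group
end

section
/- Let (L, M, N, ∂₂, ∂₁, {−,−}) be a 2-crossed module and C₃ = L ⋊ M ⋊ N the associated cat²-group, with s₂(l,m,n) = (1,m,n) and t₂(l,m,n) = (1, ∂₂(l)m, n), so that ker s₂ = {(l,1,1) : l ∈ L} and ker t₂ = {(l, ∂₂(l)⁻¹, 1) : l ∈ L}. Then the commutator [ker s₂, ker t₂] is trivial in L ⋊ M ⋊ N: for all l, l' ∈ L, [(l,1,1), (l', ∂₂(l')⁻¹, 1)] = (1,1,1). -/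
/-- in the cat²-group L ⋊ M ⋊ N of a 2-crossed module, the
commutator [ker s₂, ker t₂] is trivial: for all l, l' ∈ L,
[(l,1,1), (l', ∂₂(l')⁻¹, 1)] = (1,1,1). -/
theorem kernel_condition_cat2
    {L M N : Type*} [Group L] [Group M] [Group N]
    (phiM : N →* MulAut M) (phiL : N →* MulAut L)
    (d2 : L →* M) (d1 : M →* N) (pl : M → M → L)
    (hcomplex : ∀ l : L, d1 (d2 l) = 1)
    (heqv2 : ∀ (n : N) (l : L), d2 (phiL n l) = phiM n (d2 l))
    (heqv1 : ∀ (n : N) (m : M), d1 (phiM n m) = n * d1 m * n⁻¹)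
    (h2cm1 : ∀ m m' : M, d2 (pl m m') = phiM (d1 m) m' * m * m'⁻¹ * m⁻¹)
    (h2cm2 : ∀ l l' : L, pl (d2 l) (d2 l') = l' * l * l'⁻¹ * l⁻¹)
    (h2cm3i : ∀ m m' m'' : M,
      pl (m * m') m'' = phiL (d1 m) (pl m' m'') * pl m (m' * m'' * m'⁻¹))
    (h2cm3ii : ∀ m m' m'' : M,
      pl m (m' * m'') = pl m m' * (pl (d2 (pl m m'')) (m * m' * m⁻¹) * pl m m''))
    (h2cm4 : ∀ (m : M) (l : L), pl m (d2 l) * pl (d2 l) m = phiL (d1 m) l * l⁻¹)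
    (h2cm5 : ∀ (n : N) (m m' : M), phiL n (pl m m') = pl (phiM n m) (phiM n m')) :
    let aL : M → L → L := fun m l => pl (d2 l) m * l
    let mul3 : L × M × N → L × M × N → L × M × N := fun a b =>
      (a.1 * aL a.2.1 (phiL a.2.2 b.1), a.2.1 * phiM a.2.2 b.2.1, a.2.2 * b.2.2)
    let inv3 : L × M × N → L × M × N := fun a =>
      (phiL a.2.2⁻¹ (aL a.2.1⁻¹ a.1⁻¹), phiM a.2.2⁻¹ a.2.1⁻¹, a.2.2⁻¹)
    ∀ l l' : L,
      mul3 (mul3 (mul3 ((l, 1, 1) : L × M × N) (l', (d2 l')⁻¹, 1))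
          (inv3 (l, 1, 1))) (inv3 (l', (d2 l')⁻¹, 1)) = (1, 1, 1) := by
  intro aL mul3 inv3 l l'
  have hpl1 : ∀ m'' : M, pl 1 m'' = 1 := by
    intro m''
    have h := h2cm3i 1 1 m''
    simp at h
    exact h
  have hpl1' : ∀ m : M, pl m 1 = 1 := by
    intro m
    have h := h2cm4 m 1
    simp [hpl1] at h
    exact h
  simp only [mul3, inv3, aL]
  simp only [map_one, MulAut.one_apply, mul_one, one_mul,
    inv_one, hpl1, hpl1', ← map_inv, h2cm2]
  refine Prod.ext ?_ (Prod.ext ?_ ?_) <;> simp [h2cm2, ← map_inv] <;> group <;> simp [← map_zpow]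
end

section
/- Let (L, M, N, ∂₂, ∂₁, {−,−}) be a 2-crossed module, K a field, and let K₁ = K(N) with basis {e_n}, and K₂ the quotient of the span of symbols v̄_{m,n} (images of e_{(m,n)} − e_{(1,n)}) modulo the relations v̄_{m'm,n} = v̄_{m,n} + v̄_{m', ∂₁(m)n}. For (m,n) ∈ M ⋊ N, define λ'_{m,n}: K₁ → K₂ by λ'_{m,n}(e_{n'}) = v̄_{ⁿ'm, n'n}, and let τ̄₂: K₂ → K₁ be the linear map with τ̄₂(v̄_{m,n}) = e_{∂₁(m)n} − e_n, and λ⁰_n: K₁ → K₁ with λ⁰_n(e_{n'}) = e_{n'n}. Then τ̄₂ ∘ λ'_{m,n} = λ⁰_{∂₁(m)n} − λ⁰_n. -/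
/-- The relation submodule defining K₂: v̄_{m'm,n} = v̄_{m,n} + v̄_{m',∂₁(m)n}. -/
noncomputable def Rel2 (K : Type*) {M N : Type*} [Field K] [Group M] [Group N]
    (d1 : M →* N) : Submodule K ((M × N) →₀ K) :=
  Submodule.span K {x | ∃ (m m' : M) (n : N),
    x = Finsupp.single ((m' * m, n) : M × N) (1 : K)
      - Finsupp.single (m, n) 1 - Finsupp.single (m', d1 m * n) 1}

theorem map_act_mul_mul_of_equivariant {M N : Type*} [Group N] (act : N → M → M) (d : M → N)
    (hd : ∀ (n : N) (m : M), d (act n m) = n * d m * n⁻¹) (m : M) (n n' : N) :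
    d (act n' m) * (n' * n) = n' * (d m * n) := by
  rw [hd]
  group

theorem tau2_comp_lam_eq_general
    {K : Type*} [Field K]
    {M N : Type*} [Group M] [Group N]
    (phiM : N →* MulAut M)
    (d1 : M →* N)
    (heqv1 : ∀ (n : N) (m : M), d1 (phiM n m) = n * d1 m * n⁻¹)
    (lam' : M → N → ((N →₀ K) →ₗ[K] (((M × N) →₀ K) ⧸ Rel2 K d1)))
    (hlam' : ∀ (m : M) (n n' : N),
      lam' m n (Finsupp.single n' 1) =
        Submodule.Quotient.mk
          (Finsupp.single ((phiM n' m, n' * n) : M × N) (1 : K)))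
    (tau2 : (((M × N) →₀ K) ⧸ Rel2 K d1) →ₗ[K] (N →₀ K))
    (htau2 : ∀ (m : M) (n : N),
      tau2 (Submodule.Quotient.mk
          (Finsupp.single ((m, n) : M × N) (1 : K))) =
        Finsupp.single (d1 m * n) 1 - Finsupp.single n 1)
    (lam0 : N → ((N →₀ K) →ₗ[K] (N →₀ K)))
    (hlam0 : ∀ n n' : N, lam0 n (Finsupp.single n' 1) = Finsupp.single (n' * n) 1) :
    ∀ (m : M) (n : N), tau2 ∘ₗ lam' m n = lam0 (d1 m * n) - lam0 n := by
  intro m n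
  refine Finsupp.lhom_ext' fun n' => LinearMap.ext_ring ?_
  simp only [LinearMap.comp_apply, LinearMap.sub_apply, Finsupp.lsingle_apply, hlam', htau2,
    hlam0, map_act_mul_mul_of_equivariant (phiM · ·) d1 heqv1]

/-- τ̄₂ ∘ λ'_{m,n} = λ⁰_{∂₁(m)n} − λ⁰_n, where
λ'_{m,n}(e_{n'}) = v̄_{ⁿ'm, n'n}, τ̄₂(v̄_{m,n}) = e_{∂₁(m)n} − e_n and
λ⁰_n(e_{n'}) = e_{n'n}. -/
theorem tau2_comp_lam_eq
    {K : Type*} [Field K]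
    {L M N : Type*} [Group L] [Group M] [Group N]
    (phiM : N →* MulAut M) (phiL : N →* MulAut L)
    (d2 : L →* M) (d1 : M →* N) (pl : M → M → L)
    (hcomplex : ∀ l : L, d1 (d2 l) = 1)
    (heqv2 : ∀ (n : N) (l : L), d2 (phiL n l) = phiM n (d2 l))
    (heqv1 : ∀ (n : N) (m : M), d1 (phiM n m) = n * d1 m * n⁻¹)
    (h2cm1 : ∀ m m' : M, d2 (pl m m') = phiM (d1 m) m' * m * m'⁻¹ * m⁻¹)
    (h2cm2 : ∀ l l' : L, pl (d2 l) (d2 l') = l' * l * l'⁻¹ * l⁻¹)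
    (h2cm3i : ∀ m m' m'' : M,
      pl (m * m') m'' = phiL (d1 m) (pl m' m'') * pl m (m' * m'' * m'⁻¹))
    (h2cm3ii : ∀ m m' m'' : M,
      pl m (m' * m'') = pl m m' * (pl (d2 (pl m m'')) (m * m' * m⁻¹) * pl m m''))
    (h2cm4 : ∀ (m : M) (l : L), pl m (d2 l) * pl (d2 l) m = phiL (d1 m) l * l⁻¹)
    (h2cm5 : ∀ (n : N) (m m' : M), phiL n (pl m m') = pl (phiM n m) (phiM n m'))
    (lam' : M → N → ((N →₀ K) →ₗ[K] (((M × N) →₀ K) ⧸ Rel2 K d1)))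
    (hlam' : ∀ (m : M) (n n' : N),
      lam' m n (Finsupp.single n' 1) =
        Submodule.Quotient.mk
          (Finsupp.single ((phiM n' m, n' * n) : M × N) (1 : K)))
    (tau2 : (((M × N) →₀ K) ⧸ Rel2 K d1) →ₗ[K] (N →₀ K))
    (htau2 : ∀ (m : M) (n : N),
      tau2 (Submodule.Quotient.mk
          (Finsupp.single ((m, n) : M × N) (1 : K))) =
        Finsupp.single (d1 m * n) 1 - Finsupp.single n 1)
    (lam0 : N → ((N →₀ K) →ₗ[K] (N →₀ K)))
    (hlam0 : ∀ n n' : N, lam0 n (Finsupp.single n' 1) = Finsupp.single (n' * n) 1) :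
    ∀ (m : M) (n : N), tau2 ∘ₗ lam' m n = lam0 (d1 m * n) - lam0 n :=
  tau2_comp_lam_eq_general phiM d1 heqv1 lam' hlam' tau2 htau2 lam0 hlam0
end
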